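/- arXiv:2110.03336 — 6 statements merged into one kernel-verified Lean document; each statement's English description precedes it below -/
import Mathlib

section
/- Let G be a group acting on a vector space V via a representation ρ₁ and on W via ρ₂, and let F : V → (nonempty finite subsets of G) be a G-equivariant frame, i.e., F(ρ₁(g)X) = g·F(X) (as sets) for all g ∈ G, X ∈ V. Then for any function φ : V → ℝ, the frame average ⟨φ⟩_F(X) = (1/|F(X)|) · Σ_{g ∈ F(X)} φ(ρ₁(g)⁻¹ X) is G-invariant: ⟨φ⟩_F(ρ₁(g)X) = ⟨φ⟩_F(X) for all g ∈ G, X ∈ V. -/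
/-- Frame averaging of a scalar function over a `G`-equivariant frame is `G`-invariant. -/
theorem frame_average_invariant {G V : Type*} [Group G] [DecidableEq G]
    (ρ₁ : G →* Equiv.Perm V)
    (F : V → Finset G)
    (hne : ∀ X : V, (F X).Nonempty)
    (hequi : ∀ (g : G) (X : V), F (ρ₁ g X) = (F X).image (fun h => g * h))
    (φ : V → ℝ) (g : G) (X : V) :
    (1 / ((F (ρ₁ g X)).card : ℝ)) * ∑ h ∈ F (ρ₁ g X), φ (ρ₁ h⁻¹ (ρ₁ g X))
      = (1 / ((F X).card : ℝ)) * ∑ h ∈ F X, φ (ρ₁ h⁻¹ X) := by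
  have hinj : Function.Injective (fun h : G => g * h) := fun a b => by simp
  rw [hequi g X, Finset.card_image_of_injective _ hinj,
    Finset.sum_image (fun a _ b _ h => hinj h)]
  congr 1
  apply Finset.sum_congr rfl
  intro h _
  congr 1
  have : ρ₁ (g * h)⁻¹ (ρ₁ g X) = ρ₁ (h⁻¹ * g⁻¹ * g) X := by
    rw [mul_inv_rev]
    simp [map_mul]
  simpa using this
end

section
/- Let G be a group acting on vector spaces V, W via representations ρ₁, ρ₂, and let F be a G-equivariant frame with finite values. Then for any function Φ : V → W, the frame average ⟨Φ⟩_F(X) = (1/|F(X)|) · Σ_{g ∈ F(X)} ρ₂(g) Φ(ρ₁(g)⁻¹ X) is G-equivariant: ⟨Φ⟩_F(ρ₁(g)X) = ρ₂(g) ⟨Φ⟩_F(X) for all g ∈ G, X ∈ V. -/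
/-- Frame averaging of a vector-valued function over a `G`-equivariant frame is
`G`-equivariant. -/
theorem frame_average_equivariant {G V W : Type*} [Group G] [DecidableEq G]
    [AddCommGroup W] [Module ℝ W]
    (ρ₁ : G →* Equiv.Perm V)
    (ρ₂ : Representation ℝ G W)
    (F : V → Finset G)
    (hne : ∀ X : V, (F X).Nonempty)
    (hequi : ∀ (g : G) (X : V), F (ρ₁ g X) = (F X).image (fun h => g * h))
    (Φ : V → W) (g : G) (X : V) :
    (((F (ρ₁ g X)).card : ℝ))⁻¹ • ∑ h ∈ F (ρ₁ g X), ρ₂ h (Φ (ρ₁ h⁻¹ (ρ₁ g X)))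
      = ρ₂ g ((((F X).card : ℝ))⁻¹ • ∑ h ∈ F X, ρ₂ h (Φ (ρ₁ h⁻¹ X))) := by
  rw [hequi]
  rw [Finset.card_image_of_injective _ (mul_right_injective g)]
  rw [Finset.sum_image (by intro a _ b _ h; exact mul_left_cancel h)]
  rw [map_smul, map_sum]
  congr 1
  apply Finset.sum_congr rfl
  intro h _
  rw [mul_inv_rev, map_mul, map_mul]
  simp [Equiv.Perm.mul_apply]
end

section
/- Let G and H be groups acting on V via commuting representations ρ₁ (of G) and τ₁ (of H), i.e., ρ₁(g)τ₁(h) = τ₁(h)ρ₁(g) for all g ∈ G, h ∈ H. Let F be a frame that is G-equivariant (F(ρ₁(g)X) = gF(X)) and H-invariant (F(τ₁(h)X) = F(X)). If φ : V → ℝ is H-invariant (φ(τ₁(h)X) = φ(X)), then the frame average ⟨φ⟩_F(X) = (1/|F(X)|) Σ_{g ∈ F(X)} φ(ρ₁(g)⁻¹X) is invariant under the joint action of G × H, i.e., ⟨φ⟩_F(τ₁(h)ρ₁(g)X) = ⟨φ⟩_F(X) for all g ∈ G, h ∈ H, X ∈ V. -/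
/-- If the frame is `G`-equivariant and `H`-invariant, the actions commute and `φ` is
`H`-invariant, then the frame average of `φ` is `G × H` invariant. -/
theorem frame_average_second_symmetry_invariant {G H V : Type*} [Group G] [Group H]
    [DecidableEq G]
    (ρ₁ : G →* Equiv.Perm V)
    (τ₁ : H →* Equiv.Perm V)
    (hcomm : ∀ (g : G) (h : H) (X : V), ρ₁ g (τ₁ h X) = τ₁ h (ρ₁ g X))
    (F : V → Finset G)
    (hne : ∀ X : V, (F X).Nonempty)
    (hGequi : ∀ (g : G) (X : V), F (ρ₁ g X) = (F X).image (fun k => g * k))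
    (hHinv : ∀ (h : H) (X : V), F (τ₁ h X) = F X)
    (φ : V → ℝ)
    (hφ : ∀ (h : H) (X : V), φ (τ₁ h X) = φ X)
    (g : G) (h : H) (X : V) :
    (1 / ((F (τ₁ h (ρ₁ g X))).card : ℝ)) *
        ∑ k ∈ F (τ₁ h (ρ₁ g X)), φ (ρ₁ k⁻¹ (τ₁ h (ρ₁ g X)))
      = (1 / ((F X).card : ℝ)) * ∑ k ∈ F X, φ (ρ₁ k⁻¹ X) := by
  have hF : F (τ₁ h (ρ₁ g X)) = (F X).image (fun k => g * k) := by
    rw [hHinv, hGequi]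
  have hinj : ∀ x ∈ F X, ∀ y ∈ F X, g * x = g * y → x = y := by
    intro x _ y _ hxy; exact mul_left_cancel hxy
  have hcard : (F (τ₁ h (ρ₁ g X))).card = (F X).card := by
    rw [hF, Finset.card_image_of_injOn hinj]
  rw [hcard, hF, Finset.sum_image hinj]
  congr 1
  apply Finset.sum_congr rfl
  intro k _
  have : (ρ₁ (g * k)⁻¹) (τ₁ h (ρ₁ g X)) = τ₁ h (ρ₁ k⁻¹ X) := by
    rw [hcomm]
    congr 1
    rw [← Equiv.Perm.mul_apply, ← map_mul]
    group
  rw [this, hφ]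
end

section
/- Let G, H be groups acting on V via commuting representations ρ₁, τ₁ and on W via commuting representations ρ₂, τ₂. Let F be a G-equivariant and H-invariant frame with finite values. If Φ : V → W is H-equivariant (Φ(τ₁(h)X) = τ₂(h)Φ(X) for all h ∈ H), then ⟨Φ⟩_F(X) = (1/|F(X)|) Σ_{g ∈ F(X)} ρ₂(g)Φ(ρ₁(g)⁻¹X) satisfies ⟨Φ⟩_F(τ₁(h)ρ₁(g)X) = τ₂(h)ρ₂(g)⟨Φ⟩_F(X) for all g ∈ G, h ∈ H, X ∈ V, i.e., ⟨Φ⟩_F is G × H equivariant. -/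
/-!
The frame average is `G`-equivariant because translating `X` by `g` translates the frame by `g`,
so the sum is reindexed by `k ↦ g * k` and each summand picks up a factor `ρ₂ g`. It is
`H`-equivariant because `H` fixes the frame and commutes with `G` on both sides, so `τ₂ h` is
pulled out of each summand through the `H`-equivariance of `Φ`. Composing the two gives
`G × H` equivariance.
-/

section FrameAverage

variable {𝕜 G H V W : Type*} [Semifield 𝕜] [Group G] [Group H] [AddCommMonoid W] [Module 𝕜 W]

noncomputable def frameAverage (ρ₁ : G →* Equiv.Perm V) (ρ₂ : Representation 𝕜 G W)
    (F : V → Finset G) (Φ : V → W) (X : V) : W :=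
  ((F X).card : 𝕜)⁻¹ • ∑ k ∈ F X, ρ₂ k (Φ (ρ₁ k⁻¹ X))

theorem frameAverage_equivariant [DecidableEq G] (ρ₁ : G →* Equiv.Perm V)
    (ρ₂ : Representation 𝕜 G W) {F : V → Finset G}
    (hF : ∀ (g : G) (X : V), F (ρ₁ g X) = (F X).image (fun k => g * k))
    (Φ : V → W) (g : G) (X : V) :
    frameAverage ρ₁ ρ₂ F Φ (ρ₁ g X) = ρ₂ g (frameAverage ρ₁ ρ₂ F Φ X) := by
  have hsummand (k : G) :
      ρ₂ (g * k) (Φ (ρ₁ (g * k)⁻¹ (ρ₁ g X))) = ρ₂ g (ρ₂ k (Φ (ρ₁ k⁻¹ X))) := by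
    simp
  simp only [frameAverage, hF, Finset.card_image_of_injective _ (mul_right_injective g),
    Finset.sum_image fun _ _ _ _ => mul_left_cancel, hsummand, map_smul, map_sum]

theorem frameAverage_equivariant_of_commute (ρ₁ : G →* Equiv.Perm V) (τ₁ : H →* Equiv.Perm V)
    (ρ₂ : Representation 𝕜 G W) (τ₂ : Representation 𝕜 H W)
    (hcomm₁ : ∀ (g : G) (h : H) (X : V), ρ₁ g (τ₁ h X) = τ₁ h (ρ₁ g X))
    (hcomm₂ : ∀ (g : G) (h : H) (w : W), ρ₂ g (τ₂ h w) = τ₂ h (ρ₂ g w))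
    {F : V → Finset G} (hF : ∀ (h : H) (X : V), F (τ₁ h X) = F X)
    {Φ : V → W} (hΦ : ∀ (h : H) (X : V), Φ (τ₁ h X) = τ₂ h (Φ X)) (h : H) (X : V) :
    frameAverage ρ₁ ρ₂ F Φ (τ₁ h X) = τ₂ h (frameAverage ρ₁ ρ₂ F Φ X) := by
  simp only [frameAverage, hF, hcomm₁, hΦ, hcomm₂, map_smul, map_sum]

end FrameAverage

theorem frame_average_second_symmetry_equivariant_general {G H V W : Type*} [Group G] [Group H]
    [DecidableEq G] [AddCommGroup W] [Module ℝ W]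
    (ρ₁ : G →* Equiv.Perm V)
    (τ₁ : H →* Equiv.Perm V)
    (ρ₂ : Representation ℝ G W)
    (τ₂ : Representation ℝ H W)
    (hcomm₁ : ∀ (g : G) (h : H) (X : V), ρ₁ g (τ₁ h X) = τ₁ h (ρ₁ g X))
    (hcomm₂ : ∀ (g : G) (h : H) (w : W), ρ₂ g (τ₂ h w) = τ₂ h (ρ₂ g w))
    (F : V → Finset G)
    (hGequi : ∀ (g : G) (X : V), F (ρ₁ g X) = (F X).image (fun k => g * k))
    (hHinv : ∀ (h : H) (X : V), F (τ₁ h X) = F X)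
    (Φ : V → W)
    (hΦ : ∀ (h : H) (X : V), Φ (τ₁ h X) = τ₂ h (Φ X))
    (g : G) (h : H) (X : V) :
    (((F (τ₁ h (ρ₁ g X))).card : ℝ))⁻¹ •
        ∑ k ∈ F (τ₁ h (ρ₁ g X)), ρ₂ k (Φ (ρ₁ k⁻¹ (τ₁ h (ρ₁ g X))))
      = τ₂ h (ρ₂ g ((((F X).card : ℝ))⁻¹ • ∑ k ∈ F X, ρ₂ k (Φ (ρ₁ k⁻¹ X)))) := by
  change frameAverage ρ₁ ρ₂ F Φ (τ₁ h (ρ₁ g X)) = τ₂ h (ρ₂ g (frameAverage ρ₁ ρ₂ F Φ X))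
  rw [frameAverage_equivariant_of_commute ρ₁ τ₁ ρ₂ τ₂ hcomm₁ hcomm₂ hHinv hΦ,
    frameAverage_equivariant ρ₁ ρ₂ hGequi]

/-- If the frame is `G`-equivariant and `H`-invariant, the actions commute on both spaces and
`Φ` is `H`-equivariant, then the frame average of `Φ` is `G × H` equivariant. -/
theorem frame_average_second_symmetry_equivariant {G H V W : Type*} [Group G] [Group H]
    [DecidableEq G] [AddCommGroup W] [Module ℝ W]
    (ρ₁ : G →* Equiv.Perm V)
    (τ₁ : H →* Equiv.Perm V)
    (ρ₂ : Representation ℝ G W)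
    (τ₂ : Representation ℝ H W)
    (hcomm₁ : ∀ (g : G) (h : H) (X : V), ρ₁ g (τ₁ h X) = τ₁ h (ρ₁ g X))
    (hcomm₂ : ∀ (g : G) (h : H) (w : W), ρ₂ g (τ₂ h w) = τ₂ h (ρ₂ g w))
    (F : V → Finset G)
    (hne : ∀ X : V, (F X).Nonempty)
    (hGequi : ∀ (g : G) (X : V), F (ρ₁ g X) = (F X).image (fun k => g * k))
    (hHinv : ∀ (h : H) (X : V), F (τ₁ h X) = F X)
    (Φ : V → W)
    (hΦ : ∀ (h : H) (X : V), Φ (τ₁ h X) = τ₂ h (Φ X))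
    (g : G) (h : H) (X : V) :
    (((F (τ₁ h (ρ₁ g X))).card : ℝ))⁻¹ •
        ∑ k ∈ F (τ₁ h (ρ₁ g X)), ρ₂ k (Φ (ρ₁ k⁻¹ (τ₁ h (ρ₁ g X))))
      = τ₂ h (ρ₂ g ((((F X).card : ℝ))⁻¹ • ∑ k ∈ F X, ρ₂ k (Φ (ρ₁ k⁻¹ X)))) :=
  frame_average_second_symmetry_equivariant_general ρ₁ τ₁ ρ₂ τ₂ hcomm₁ hcomm₂ F hGequi hHinv Φ hΦ g
    h X
end

section
/- Let G act on V via ρ₁ and F be a G-equivariant frame. Fix X ∈ V with stabilizer G_X, and let φ : V → ℝ be arbitrary. Then for any g ∈ F(X) and any h in the orbit G_X·g, φ(ρ₁(h)⁻¹X) = φ(ρ₁(g)⁻¹X). Consequently, ⟨φ⟩_F(X) = (1/m) Σ_{[g] ∈ F(X)/G_X} φ(ρ₁(g)⁻¹X) where m = |F(X)|/|G_X| and the sum takes one representative per orbit. -/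
/-- The summands of the invariant frame average are constant on the orbits of the
stabilizer, and hence the frame average equals the average over one representative per
orbit. -/
theorem frame_average_quotient {G V : Type*} [Group G] [DecidableEq G]
    (ρ₁ : G →* Equiv.Perm V)
    (F : V → Finset G)
    (hne : ∀ X : V, (F X).Nonempty)
    (hequi : ∀ (g : G) (X : V), F (ρ₁ g X) = (F X).image (fun h => g * h))
    (X : V) (S : Finset G)
    (hS : ∀ r : G, r ∈ S ↔ ρ₁ r X = X)
    (φ : V → ℝ) :
    (∀ g ∈ F X, ∀ r ∈ S, φ (ρ₁ (r * g)⁻¹ X) = φ (ρ₁ g⁻¹ X)) ∧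
    (∀ R : Finset G, R ⊆ F X →
      (∀ g ∈ F X, ∃! r, r ∈ R ∧ S.image (fun s => s * r) = S.image (fun s => s * g)) →
      (1 / ((F X).card : ℝ)) * ∑ g ∈ F X, φ (ρ₁ g⁻¹ X)
        = (1 / (R.card : ℝ)) * ∑ g ∈ R, φ (ρ₁ g⁻¹ X)) := by
  -- basic facts about S
  have hinvX : ∀ r ∈ S, ρ₁ r⁻¹ X = X := by
    intro r hr
    have hrX : ρ₁ r X = X := (hS r).mp hr
    nth_rewrite 1 [← hrX]
    rw [← Equiv.Perm.mul_apply, ← map_mul]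
    simp
  have hone : (1 : G) ∈ S := by rw [hS]; simp
  have hmul : ∀ s ∈ S, ∀ t ∈ S, s * t ∈ S := by
    intro s hs t ht
    rw [hS, map_mul, Equiv.Perm.mul_apply, (hS t).mp ht, (hS s).mp hs]
  have hinv : ∀ s ∈ S, s⁻¹ ∈ S := by
    intro s hs
    rw [hS]
    exact hinvX s hs
  -- part 1
  have part1 : ∀ g ∈ F X, ∀ r ∈ S, φ (ρ₁ (r * g)⁻¹ X) = φ (ρ₁ g⁻¹ X) := by
    intro g hg r hr
    have : (ρ₁ (r * g)⁻¹) X = (ρ₁ g⁻¹) X := by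
      rw [mul_inv_rev, map_mul, Equiv.Perm.mul_apply, hinvX r hr]
    rw [this]
  refine ⟨part1, ?_⟩
  intro R hRF hu
  -- translation lemma for orbits
  have horb : ∀ s ∈ S, ∀ g : G,
      S.image (fun u => u * (s * g)) = S.image (fun u => u * g) := by
    intro s hs g
    ext x
    simp only [Finset.mem_image]
    constructor
    · rintro ⟨u, hu, rfl⟩
      exact ⟨u * s, hmul u hu s hs, by group⟩
    · rintro ⟨v, hv, rfl⟩
      exact ⟨v * s⁻¹, hmul v hv s⁻¹ (hinv s hs), by group⟩
  -- orbit elements stay in F X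
  have horbF : ∀ s ∈ S, ∀ g ∈ F X, s * g ∈ F X := by
    intro s hs g hg
    have h1 : F (ρ₁ s X) = (F X).image (fun h => s * h) := hequi s X
    rw [(hS s).mp hs] at h1
    rw [h1]
    exact Finset.mem_image_of_mem _ hg
  -- F X is the disjoint union of the orbits
  have hcover : F X = R.biUnion (fun r => S.image (fun s => s * r)) := by
    ext x
    simp only [Finset.mem_biUnion, Finset.mem_image]
    constructor
    · intro hx
      obtain ⟨r, ⟨hrR, hre⟩, -⟩ := hu x hx
      refine ⟨r, hrR, ?_⟩
      have hx1 : x ∈ S.image (fun s => s * x) := Finset.mem_image.mpr ⟨1, hone, one_mul x⟩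
      rw [← hre] at hx1
      exact Finset.mem_image.mp hx1
    · rintro ⟨r, hrR, s, hs, rfl⟩
      exact horbF s hs r (hRF hrR)
  have hdisj : ∀ r₁ ∈ R, ∀ r₂ ∈ R, r₁ ≠ r₂ →
      Disjoint (S.image (fun s => s * r₁)) (S.image (fun s => s * r₂)) := by
    intro r₁ h1 r₂ h2 hne12
    rw [Finset.disjoint_left]
    rintro x hx1 hx2
    simp only [Finset.mem_image] at hx1 hx2
    obtain ⟨s₁, hs₁, rfl⟩ := hx1
    obtain ⟨s₂, hs₂, heq⟩ := hx2
    have hxF : s₁ * r₁ ∈ F X := horbF s₁ hs₁ r₁ (hRF h1)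
    obtain ⟨r, -, hruniq⟩ := hu (s₁ * r₁) hxF
    have e1 : r₁ = r := hruniq r₁ ⟨h1, (horb s₁ hs₁ r₁).symm⟩
    have e2 : r₂ = r := hruniq r₂ ⟨h2, by rw [← heq]; exact (horb s₂ hs₂ r₂).symm⟩
    exact hne12 (e1.trans e2.symm)
  -- sums
  have hsum : ∑ g ∈ F X, φ (ρ₁ g⁻¹ X)
      = (S.card : ℝ) * ∑ r ∈ R, φ (ρ₁ r⁻¹ X) := by
    rw [hcover, Finset.sum_biUnion]
    · rw [Finset.mul_sum]
      refine Finset.sum_congr rfl ?_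
      intro r hr
      rw [Finset.sum_image (by intro a _ b _ h; exact mul_right_cancel h)]
      have : ∀ s ∈ S, φ (ρ₁ (s * r)⁻¹ X) = φ (ρ₁ r⁻¹ X) := by
        intro s hs
        exact part1 r (hRF hr) s hs
      rw [Finset.sum_congr rfl this, Finset.sum_const, nsmul_eq_mul]
    · intro r₁ h1 r₂ h2 h12
      exact hdisj r₁ h1 r₂ h2 h12
  have hcard : (F X).card = R.card * S.card := by
    rw [hcover, Finset.card_biUnion hdisj]
    have hc : ∀ r ∈ R, (S.image (fun s => s * r)).card = S.card :=
      fun r _ => Finset.card_image_of_injective _ (fun a b h => mul_right_cancel h)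
    rw [Finset.sum_congr rfl hc, Finset.sum_const, smul_eq_mul]
  have hScard : S.card ≠ 0 := Finset.card_ne_zero_of_mem hone
  have hRcard : R.card ≠ 0 := by
    obtain ⟨g, hg⟩ := hne X
    obtain ⟨r, ⟨hr, -⟩, -⟩ := hu g hg
    exact Finset.card_ne_zero_of_mem hr
  rw [hsum, hcard]
  push_cast
  have hSpos : (S.card : ℝ) ≠ 0 := by exact_mod_cast hScard
  have hRpos : (R.card : ℝ) ≠ 0 := by exact_mod_cast hRcard
  field_simp
end

section
/- Let S : V → ℝ^{n×k} be a row-equivariant map on graph data (S(ρ₁(g)X) = P_g S(X) for all permutations g), and define the frame F(X) = {g ∈ Sₙ : P_g S(X) is lexicographically sorted by rows}. Then F satisfies the right-action equivariance F(ρ₁(h)⁻¹X) = F(X)·h for all h ∈ Sₙ and X ∈ V (whenever F(X) is nonempty). -/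
/-- The lexicographic-sorting frame is right-action equivariant: if `S` is row-equivariant
(`S(ρ₁(g)X)ᵢ = S(X)_{g⁻¹ i}`) and `F(X)` collects the permutations `g` whose induced row
permutation makes `S(X)` lexicographically sorted, then
`F(ρ₁(h)⁻¹ X) = F(X)·h` for all `h`, whenever `F(X)` is nonempty. -/
theorem sorting_frame_right_equivariant {n k : ℕ} {V : Type*}
    (ρ₁ : Equiv.Perm (Fin n) →* Equiv.Perm V)
    (S : V → Fin n → (Fin k → ℝ))
    (hS : ∀ (g : Equiv.Perm (Fin n)) (X : V) (i : Fin n),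
      S (ρ₁ g X) i = S X (g⁻¹ i))
    (F : V → Set (Equiv.Perm (Fin n)))
    (hF : ∀ (X : V) (g : Equiv.Perm (Fin n)),
      g ∈ F X ↔ Monotone fun i : Fin n => toLex (S X (g⁻¹ i)))
    (X : V) (hne : (F X).Nonempty) (h : Equiv.Perm (Fin n)) :
    F (ρ₁ h⁻¹ X) = (fun g => g * h) '' F X := by
  ext g
  constructor
  · intro hg
    refine ⟨g * h⁻¹, ?_, by group⟩
    rw [hF]
    rw [hF] at hg
    convert hg using 2 with i
    rw [hS h⁻¹ X]
    simp [mul_comm]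
  · rintro ⟨g', hg', rfl⟩
    rw [hF]
    rw [hF] at hg'
    convert hg' using 2 with i
    rw [hS h⁻¹ X]
    simp [mul_comm]
end
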